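/- Let A ∈ ℝ^{n×n}, B ∈ ℝ^{n×m}, let W be a subspace of ℝ^n, and let C̃ ∈ ℝ^{n×n} be a matrix whose range (column space) is contained in W. Let R = A C̃ + C̃ Aᵀ + B Bᵀ. If q ∈ ℝ^n satisfies R q = λ q for some λ ≠ 0, then q lies in the subspace A·W + W + Range(B), where A·W denotes the image of W under A and Range(B) the column span of B. (This is the key single-iteration step in the proof of Proposition 2.1 of the paper: an eigenvector of the residual, orthogonalized against the current search space, is only nonzero in the direction of A V_k and B.) -/

import Mathlib

/-!
An eigenvector with nonzero eigenvalue lies in the range of its operator (`q = R (λ⁻¹ q)`), and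
the three terms of the residual map into `A·W`, `W` and `Range(B)` respectively.
-/

open Matrix

theorem LinearMap.mem_range_of_apply_eq_smul {K M : Type*} [DivisionRing K] [AddCommGroup M]
    [Module K M] (f : M →ₗ[K] M) {μ : K} (hμ : μ ≠ 0) {x : M} (h : f x = μ • x) :
    x ∈ LinearMap.range f :=
  ⟨μ⁻¹ • x, by rw [map_smul, h, smul_smul, inv_mul_cancel₀ hμ, one_smul]⟩

namespace Matrix

variable {R l m n : Type*} [CommRing R] [Fintype m] [Fintype n]

theorem range_mulVecLin_mul_le (C : Matrix l m R) (D : Matrix m n R) :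
    LinearMap.range (C * D).mulVecLin ≤ LinearMap.range C.mulVecLin := by
  rw [mulVecLin_mul]
  exact LinearMap.range_comp_le_range _ _

theorem range_mulVecLin_mul_le_map (A : Matrix l m R) (C : Matrix m n R)
    {W : Submodule R (m → R)} (hC : LinearMap.range C.mulVecLin ≤ W) :
    LinearMap.range (A * C).mulVecLin ≤ W.map A.mulVecLin := by
  rw [mulVecLin_mul, LinearMap.range_comp]
  exact Submodule.map_mono hC

def lyapunovResidual (A : Matrix n n R) (B : Matrix n m R) (C : Matrix n n R) : Matrix n n R :=
  A * C + C * Aᵀ + B * Bᵀ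

theorem range_mulVecLin_lyapunovResidual_le (A : Matrix n n R) (B : Matrix n m R)
    {C : Matrix n n R} {W : Submodule R (n → R)} (hC : LinearMap.range C.mulVecLin ≤ W) :
    LinearMap.range (lyapunovResidual A B C).mulVecLin ≤
      W.map A.mulVecLin ⊔ W ⊔ LinearMap.range B.mulVecLin := by
  rw [lyapunovResidual, mulVecLin_add, mulVecLin_add]
  refine (LinearMap.range_add_le _ _).trans (sup_le_sup ?_ (range_mulVecLin_mul_le B Bᵀ))
  exact (LinearMap.range_add_le _ _).trans <| sup_le_sup (range_mulVecLin_mul_le_map A C hC)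
    ((range_mulVecLin_mul_le C Aᵀ).trans hC)

end Matrix

/-- The key single-iteration step in the proof of Proposition 2.1 of the paper: if the
range of `C̃` is contained in a subspace `W` and `q` is an eigenvector with nonzero
eigenvalue of the residual `R = A C̃ + C̃ Aᵀ + B Bᵀ`, then
`q ∈ A·W + W + Range(B)`. -/
theorem residual_eigenvector_mem
    {n m : ℕ} (A : Matrix (Fin n) (Fin n) ℝ) (B : Matrix (Fin n) (Fin m) ℝ)
    (W : Submodule ℝ (Fin n → ℝ)) (C : Matrix (Fin n) (Fin n) ℝ)
    (hrange : LinearMap.range (Matrix.mulVecLin C) ≤ W)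
    (q : Fin n → ℝ) (lam : ℝ) (hlam : lam ≠ 0)
    (heig : (A * C + C * Aᵀ + B * Bᵀ).mulVec q = lam • q) :
    q ∈ Submodule.map (Matrix.mulVecLin A) W ⊔ W ⊔
      LinearMap.range (Matrix.mulVecLin B) :=
  range_mulVecLin_lyapunovResidual_le A B hrange <|
    (lyapunovResidual A B C).mulVecLin.mem_range_of_apply_eq_smul hlam heig
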